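/- Every worm A is equivalent in GLP_Λ to some worm in worm normal form whose modalities are among those of A. -/

import Mathlib

inductive Formula (L : Type) : Type where
  | bot : Formula L
  | var : Nat → Formula L
  | imp : Formula L → Formula L → Formula L
  | box : L → Formula L → Formula L

namespace Formula

variable {L : Type}

def neg (φ : Formula L) : Formula L := imp φ bot
def top : Formula L := neg bot
def and (φ ψ : Formula L) : Formula L := neg (imp φ ψ.neg)
def or (φ ψ : Formula L) : Formula L := imp φ.neg ψ
def iff (φ ψ : Formula L) : Formula L := (imp φ ψ).and (imp ψ φ)
def dia (α : L) (φ : Formula L) : Formula L := neg (box α φ.neg)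

end Formula

open Formula

/-- Provability in the polymodal provability logic `GLP_Λ` over a linear order. -/
inductive GLP {L : Type} [LinearOrder L] : Formula L → Prop where
  | k1 : ∀ φ ψ : Formula L, GLP (φ.imp (ψ.imp φ))
  | k2 : ∀ φ ψ χ : Formula L, GLP ((φ.imp (ψ.imp χ)).imp ((φ.imp ψ).imp (φ.imp χ)))
  | k3 : ∀ φ ψ : Formula L, GLP ((φ.neg.imp ψ.neg).imp (ψ.imp φ))
  | dist : ∀ (α : L) (φ ψ : Formula L), GLP ((Formula.box α (φ.imp ψ)).imp ((Formula.box α φ).imp (Formula.box α ψ)))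
  | lob : ∀ (α : L) (φ : Formula L), GLP ((Formula.box α ((Formula.box α φ).imp φ)).imp (Formula.box α φ))
  | trans : ∀ (α β : L) (φ : Formula L), α ≤ β → GLP ((Formula.box α φ).imp (Formula.box β (Formula.box α φ)))
  | negintro : ∀ (α β : L) (φ : Formula L), α < β → GLP ((dia α φ).imp (Formula.box β (dia α φ)))
  | mono : ∀ (α β : L) (φ : Formula L), α ≤ β → GLP ((Formula.box α φ).imp (Formula.box β φ))
  | mp : ∀ φ ψ : Formula L, GLP (φ.imp ψ) → GLP φ → GLP ψ
  | nec : ∀ (α : L) (φ : Formula L), GLP φ → GLP (Formula.box α φ)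

/-- The worm (iterated consistency statement) associated to a list of modalities. -/
def worm {L : Type} : List L → Formula L
  | [] => Formula.top
  | α :: w => Formula.dia α (worm w)

/-- `Lt α A B` iff `GLP ⊢ B → ⟨α⟩A`. -/
def Lt {L : Type} [LinearOrder L] (α : L) (A B : List L) : Prop :=
  GLP ((worm B).imp (Formula.dia α (worm A)))

def Le {L : Type} [LinearOrder L] (α : L) (A B : List L) : Prop :=
  Lt α A B ∨ A = B

/-- Join a list of blocks, separating consecutive blocks by the modality `α`. -/
def joinSep {L : Type} (α : L) : List (List L) → List L
  | [] => []
  | [p] => p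
  | p :: ps => p ++ α :: joinSep α ps

/-- Worm normal form. -/
inductive WNF {L : Type} [LinearOrder L] [SuccOrder L] : List L → Prop where
  | nil : WNF []
  | node (α : L) (parts : List (List L))
      (hlen : 2 ≤ parts.length)
      (hmods : ∀ p ∈ parts, ∀ β ∈ p, α < β)
      (hwnf : ∀ p ∈ parts, WNF p)
      (hord : parts.Chain' (Le (Order.succ α)))
      : WNF (joinSep α parts)

/-!
Worms whose modalities are all `≥ β` are linearly preordered by `<_β`: for `U, V` one has
`U <_β V`, `U ≡ V` or `V <_β U`. This is proved by induction on `|U| + |V|`, splitting each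
worm at the first occurrence of the least modality `δ` as `h δ b`, where `h δ b ≡ h ∧ ⟨δ⟩b`:
the bodies are compared at level `δ`, the heads at level `δ + 1`.

For the normal form, split `A = h γ t` at the first occurrence of its least modality `γ`,
normalise `h` and `t` recursively and insert the normal form of `h` in front of the
`γ`-blocks `q₁ γ q₂ γ ⋯` of the normal form of `t`. By trichotomy, either `h ≤_{γ+1} q₁`, and
`h γ q₁ γ ⋯` is already normal, or `q₁ <_{γ+1} h`, and then `h γ q₁ γ T ≡ h γ T`.
-/

section Lists

variable {L : Type} [LinearOrder L]

theorem List.exists_mem_forall_le_of_ne_nil {l : List L} (hl : l ≠ []) :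
    ∃ a ∈ l, ∀ b ∈ l, a ≤ b := by
  obtain ⟨a, ha⟩ := Option.isSome_iff_exists.mp (List.isSome_min?_of_ne_nil hl)
  exact ⟨a, (List.min?_eq_some_iff.mp ha).1, (List.min?_eq_some_iff.mp ha).2⟩

theorem List.exists_eq_append_cons_forall_lt {δ : L} {l : List L} (hδ : δ ∈ l)
    (hl : ∀ m ∈ l, δ ≤ m) : ∃ s t, l = s ++ δ :: t ∧ ∀ m ∈ s, δ < m := by
  obtain ⟨s, t, rfl, hs⟩ := List.eq_append_cons_of_mem hδ
  exact ⟨s, t, rfl, fun m hm => (hl m (by simp [hm])).lt_of_ne fun e => hs (e ▸ hm)⟩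

end Lists

namespace GLP

variable {L : Type} [LinearOrder L]

theorem mp' {φ ψ : Formula L} (h : GLP (φ.imp ψ)) (h' : GLP φ) : GLP ψ := GLP.mp _ _ h h'

theorem imp_id (φ : Formula L) : GLP (φ.imp φ) :=
  mp' (mp' (GLP.k2 φ (φ.imp φ) φ) (GLP.k1 φ (φ.imp φ))) (GLP.k1 φ φ)

theorem imp_intro {φ ψ : Formula L} (h : GLP ψ) : GLP (φ.imp ψ) := mp' (GLP.k1 _ _) h

theorem imp_apply {φ ψ χ : Formula L} (h : GLP (φ.imp (ψ.imp χ))) (h' : GLP (φ.imp ψ)) :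
    GLP (φ.imp χ) :=
  mp' (mp' (GLP.k2 _ _ _) h) h'

theorem imp_trans {φ ψ χ : Formula L} (h : GLP (φ.imp ψ)) (h' : GLP (ψ.imp χ)) :
    GLP (φ.imp χ) :=
  imp_apply (imp_intro h') h

theorem imp_comp (φ ψ χ : Formula L) : GLP ((ψ.imp χ).imp ((φ.imp ψ).imp (φ.imp χ))) :=
  imp_trans (GLP.k1 _ _) (GLP.k2 _ _ _)

theorem imp_swap_imp (φ ψ χ : Formula L) :
    GLP ((φ.imp (ψ.imp χ)).imp (ψ.imp (φ.imp χ))) :=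
  imp_trans (GLP.k2 φ ψ χ)
    (imp_apply (imp_comp ψ (φ.imp ψ) (φ.imp χ)) (imp_intro (GLP.k1 ψ φ)))

theorem imp_swap {φ ψ χ : Formula L} (h : GLP (φ.imp (ψ.imp χ))) : GLP (ψ.imp (φ.imp χ)) :=
  mp' (imp_swap_imp φ ψ χ) h

theorem imp_imp_of_imp {φ ψ χ : Formula L} (h : GLP (ψ.imp χ)) :
    GLP ((φ.imp ψ).imp (φ.imp χ)) :=
  mp' (imp_comp φ ψ χ) h

theorem neg_imp_neg {φ ψ : Formula L} (h : GLP (φ.imp ψ)) : GLP (ψ.neg.imp φ.neg) :=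
  mp' (imp_swap (imp_comp φ ψ Formula.bot)) h

theorem efq (φ : Formula L) : GLP (Formula.bot.imp φ) :=
  mp' (GLP.k3 φ Formula.bot) (imp_intro (imp_id Formula.bot))

theorem imp_neg_neg (φ : Formula L) : GLP (φ.imp φ.neg.neg) := imp_swap (imp_id φ.neg)

theorem neg_neg_imp (φ : Formula L) : GLP (φ.neg.neg.imp φ) :=
  mp' (GLP.k3 φ φ.neg.neg) (imp_neg_neg φ.neg)

theorem neg_imp_of_neg_imp {φ ψ : Formula L} (h : GLP (φ.neg.imp ψ)) : GLP (ψ.neg.imp φ) :=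
  imp_trans (neg_imp_neg h) (neg_neg_imp φ)

theorem and_intro (φ ψ : Formula L) : GLP (φ.imp (ψ.imp (φ.and ψ))) :=
  imp_trans (imp_swap (imp_id (φ.imp ψ.neg))) (imp_swap_imp _ _ _)

theorem and_left (φ ψ : Formula L) : GLP ((φ.and ψ).imp φ) :=
  neg_imp_of_neg_imp
    (imp_swap (imp_trans (imp_neg_neg φ) (imp_imp_of_imp (efq ψ.neg))))

theorem and_right (φ ψ : Formula L) : GLP ((φ.and ψ).imp ψ) :=
  neg_imp_of_neg_imp (GLP.k1 ψ.neg φ)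

theorem imp_and {φ ψ χ : Formula L} (h : GLP (χ.imp φ)) (h' : GLP (χ.imp ψ)) :
    GLP (χ.imp (φ.and ψ)) :=
  imp_apply (imp_trans h (and_intro φ ψ)) h'

theorem iff_intro {φ ψ : Formula L} (h : GLP (φ.imp ψ)) (h' : GLP (ψ.imp φ)) :
    GLP (φ.iff ψ) :=
  mp' (mp' (and_intro _ _) h) h'

theorem iff_mp {φ ψ : Formula L} (h : GLP (φ.iff ψ)) : GLP (φ.imp ψ) := mp' (and_left _ _) h

theorem iff_mpr {φ ψ : Formula L} (h : GLP (φ.iff ψ)) : GLP (ψ.imp φ) := mp' (and_right _ _) h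

theorem iff_refl (φ : Formula L) : GLP (φ.iff φ) := iff_intro (imp_id φ) (imp_id φ)

theorem iff_symm {φ ψ : Formula L} (h : GLP (φ.iff ψ)) : GLP (ψ.iff φ) :=
  iff_intro (iff_mpr h) (iff_mp h)

theorem iff_trans {φ ψ χ : Formula L} (h : GLP (φ.iff ψ)) (h' : GLP (ψ.iff χ)) :
    GLP (φ.iff χ) :=
  iff_intro (imp_trans (iff_mp h) (iff_mp h')) (imp_trans (iff_mpr h') (iff_mpr h))

theorem box_mono {α : L} {φ ψ : Formula L} (h : GLP (φ.imp ψ)) :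
    GLP ((Formula.box α φ).imp (Formula.box α ψ)) :=
  mp' (GLP.dist α φ ψ) (GLP.nec α _ h)

theorem dia_mono {α : L} {φ ψ : Formula L} (h : GLP (φ.imp ψ)) :
    GLP ((dia α φ).imp (dia α ψ)) :=
  neg_imp_neg (box_mono (neg_imp_neg h))

theorem dia_of_le {α β : L} (h : α ≤ β) (φ : Formula L) :
    GLP ((dia β φ).imp (dia α φ)) :=
  neg_imp_neg (GLP.mono α β φ.neg h)

theorem dia_dia_of_le {α β : L} (h : α ≤ β) (φ : Formula L) :
    GLP ((dia β (dia α φ)).imp (dia α φ)) :=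
  neg_imp_neg (imp_trans (GLP.trans α β φ.neg h) (box_mono (imp_neg_neg _)))

theorem dia_and_box (α : L) (φ ψ : Formula L) :
    GLP ((dia α φ).imp ((Formula.box α ψ).imp (dia α (φ.and ψ)))) := by
  have h : GLP ((Formula.box α (φ.and ψ).neg).imp
      ((Formula.box α ψ).imp (Formula.box α φ.neg))) :=
    imp_trans (box_mono (imp_swap (imp_trans (imp_swap (and_intro φ ψ))
      (imp_swap (imp_comp φ (φ.and ψ) Formula.bot))))) (GLP.dist α ψ φ.neg)
  exact imp_swap (imp_trans (imp_swap h) (imp_swap (imp_comp _ _ Formula.bot)))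

theorem dia_and_dia {α β : L} (h : α < β) (φ ψ : Formula L) :
    GLP (((dia β φ).and (dia α ψ)).imp (dia β (φ.and (dia α ψ)))) :=
  imp_apply (imp_trans (and_left _ _) (dia_and_box β φ (dia α ψ)))
    (imp_trans (and_right _ _) (GLP.negintro α β ψ h))

end GLP

section Worms

variable {L : Type} [LinearOrder L]

theorem worm_append_imp (P Q : List L) : GLP ((worm (P ++ Q)).imp (worm P)) := by
  induction P with
  | nil => exact GLP.imp_intro (GLP.imp_id Formula.bot)
  | cons α P ih => exact GLP.dia_mono ih

theorem lt_append_cons {γ : L} {P : List L} (hP : ∀ m ∈ P, γ ≤ m) (T : List L) :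
    Lt γ T (P ++ γ :: T) := by
  induction P with
  | nil => exact GLP.imp_id _
  | cons α P ih =>
    exact GLP.imp_trans (GLP.dia_mono (ih fun m hm => hP m (by simp [hm])))
      (GLP.dia_dia_of_le (hP α (by simp)) _)

theorem imp_worm_append_cons {γ : L} {P : List L} (hP : ∀ m ∈ P, γ < m) {T : List L} :
    ∀ {X : Formula L}, GLP (X.imp (worm P)) → GLP (X.imp (dia γ (worm T))) →
      GLP (X.imp (worm (P ++ γ :: T))) := by
  induction P with
  | nil => exact fun _ h => h
  | cons α P ih =>
    intro X hXP hXT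
    have hP' : GLP (((worm P).and (dia γ (worm T))).imp (worm (P ++ γ :: T))) :=
      ih (fun m hm => hP m (by simp [hm])) (GLP.and_left _ _) (GLP.and_right _ _)
    exact GLP.imp_trans (GLP.imp_and hXP hXT)
      (GLP.imp_trans (GLP.dia_and_dia (hP α (by simp)) _ _) (GLP.dia_mono hP'))

theorem worm_append_cons_congr {γ : L} {P P' T T' : List L} (hP : ∀ m ∈ P, γ < m)
    (hP' : ∀ m ∈ P', γ < m) (h : GLP ((worm P).iff (worm P')))
    (h' : GLP ((worm T).iff (worm T'))) :
    GLP ((worm (P ++ γ :: T)).iff (worm (P' ++ γ :: T'))) :=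
  GLP.iff_intro
    (imp_worm_append_cons hP' (GLP.imp_trans (worm_append_imp _ _) (GLP.iff_mp h))
      (GLP.imp_trans (lt_append_cons (fun m hm => (hP m hm).le) T)
        (GLP.dia_mono (GLP.iff_mp h'))))
    (imp_worm_append_cons hP (GLP.imp_trans (worm_append_imp _ _) (GLP.iff_mpr h))
      (GLP.imp_trans (lt_append_cons (fun m hm => (hP' m hm).le) T')
        (GLP.dia_mono (GLP.iff_mpr h'))))

namespace Lt

variable {β γ δ : L} {A B C P T : List L}

theorem trans (h : Lt β A B) (h' : Lt β B C) : Lt β A C :=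
  GLP.imp_trans h' (GLP.imp_trans (GLP.dia_mono h) (GLP.dia_dia_of_le le_rfl _))

theorem of_imp (h : Lt β A B) (hCB : GLP ((worm C).imp (worm B))) : Lt β A C :=
  GLP.imp_trans hCB h

theorem of_iff_left (hAB : GLP ((worm A).iff (worm B))) (h : Lt β B C) : Lt β A C :=
  GLP.imp_trans h (GLP.dia_mono (GLP.iff_mpr hAB))

theorem of_le (hβ : β ≤ γ) (h : Lt γ A B) : Lt β A B :=
  GLP.imp_trans h (GLP.dia_of_le hβ _)

theorem append_cons (hγ : γ < δ) (hP : ∀ m ∈ P, γ < m) (hPA : Lt δ P A) (hTA : Lt γ T A) :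
    Lt γ (P ++ γ :: T) A :=
  GLP.imp_trans (GLP.imp_and hPA hTA) (GLP.imp_trans (GLP.dia_and_dia hγ _ _)
    (GLP.imp_trans
      (GLP.dia_mono (imp_worm_append_cons hP (GLP.and_left _ _) (GLP.and_right _ _)))
      (GLP.dia_of_le hγ.le _)))

end Lt

theorem worm_append_cons_iff_of_lt {γ δ : L} {P Q : List L} (hγ : γ ≤ δ)
    (hP : ∀ m ∈ P, γ < m) (h : Lt δ Q P) :
    GLP ((worm (P ++ γ :: Q)).iff (worm P)) :=
  GLP.iff_intro (worm_append_imp _ _) (imp_worm_append_cons hP (GLP.imp_id _) (h.of_le hγ))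

theorem worm_append_cons_append_cons_iff_of_lt {γ δ : L} {P Q T : List L} (hγ : γ < δ)
    (hP : ∀ m ∈ P, γ < m) (hQ : ∀ m ∈ Q, γ < m) (h : Lt δ Q P) :
    GLP ((worm (P ++ γ :: (Q ++ γ :: T))).iff (worm (P ++ γ :: T))) := by
  have hQT : Lt γ T (Q ++ γ :: T) := lt_append_cons (fun m hm => (hQ m hm).le) T
  refine GLP.iff_intro (imp_worm_append_cons hP (worm_append_imp _ _) ?_)
    (imp_worm_append_cons hP (worm_append_imp _ _) ?_)
  · exact hQT.trans (lt_append_cons (fun m hm => (hP m hm).le) _)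
  · exact Lt.append_cons hγ hQ (h.of_imp (worm_append_imp _ _))
      (lt_append_cons (fun m hm => (hP m hm).le) T)

end Worms

section Trichotomy

variable {L : Type} [LinearOrder L]

def Trichotomy (β : L) (U V : List L) : Prop :=
  Lt β U V ∨ GLP ((worm U).iff (worm V)) ∨ Lt β V U

namespace Trichotomy

variable {β γ : L} {U V W : List L}

theorem symm (h : Trichotomy β U V) : Trichotomy β V U := by
  rcases h with h | h | h
  exacts [Or.inr (Or.inr h), Or.inr (Or.inl (GLP.iff_symm h)), Or.inl h]

theorem of_le (hβ : β ≤ γ) (h : Trichotomy γ U V) : Trichotomy β U V := by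
  rcases h with h | h | h
  exacts [Or.inl (h.of_le hβ), Or.inr (Or.inl h), Or.inr (Or.inr (h.of_le hβ))]

theorem lt_or_lt (hWV : Lt β W V) (h : Trichotomy β U W) : Lt β U V ∨ Lt β W U := by
  rcases h with h | h | h
  exacts [Or.inl (h.trans hWV), Or.inl (hWV.of_iff_left h), Or.inr h]

/-- `β < Order.succ β` fails only for maximal `β`, where both worms must be empty. -/
theorem iff_or_lt_succ [SuccOrder L] (hU : ∀ m ∈ U, β < m) (hV : ∀ m ∈ V, β < m)
    (h : Trichotomy (Order.succ β) U V) :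
    GLP ((worm U).iff (worm V)) ∨
      β < Order.succ β ∧ (Lt (Order.succ β) U V ∨ Lt (Order.succ β) V U) := by
  by_cases hUV : U = V
  · exact Or.inl (hUV ▸ GLP.iff_refl _)
  have hβ : β < Order.succ β := by
    obtain ⟨m, hm⟩ : ∃ m, β < m := by
      rcases U with _ | ⟨m, _⟩
      · rcases V with _ | ⟨m, _⟩
        · exact absurd rfl hUV
        · exact ⟨m, hV m (by simp)⟩
      · exact ⟨m, hU m (by simp)⟩
    exact Order.lt_succ_of_not_isMax (not_isMax_of_lt hm)
  rcases h with h | h | h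
  exacts [Or.inr ⟨hβ, Or.inl h⟩, Or.inl h, Or.inr ⟨hβ, Or.inr h⟩]

end Trichotomy

theorem trichotomy_append_cons {δ δ' : L} {U P T : List L} (hP : ∀ m ∈ P, δ < m)
    (hTU : Lt δ T U)
    (heads : GLP ((worm U).iff (worm P)) ∨ δ < δ' ∧ (Lt δ' U P ∨ Lt δ' P U)) :
    Trichotomy δ U (P ++ δ :: T) := by
  rcases heads with h | ⟨hδ, h | h⟩
  · exact Or.inr (Or.inl (GLP.iff_intro (imp_worm_append_cons hP (GLP.iff_mp h) hTU)
      (GLP.imp_trans (worm_append_imp _ _) (GLP.iff_mpr h))))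
  · exact Or.inl ((h.of_le hδ.le).of_imp (worm_append_imp _ _))
  · exact Or.inr (Or.inr (Lt.append_cons hδ hP h hTU))

theorem trichotomy_append_cons_append_cons {δ δ' : L} {P T P' T' : List L}
    (hP : ∀ m ∈ P, δ < m) (hP' : ∀ m ∈ P', δ < m)
    (hT : Lt δ T (P' ++ δ :: T')) (hT' : Lt δ T' (P ++ δ :: T))
    (heads : GLP ((worm P).iff (worm P')) ∨ δ < δ' ∧ (Lt δ' P P' ∨ Lt δ' P' P)) :
    Trichotomy δ (P ++ δ :: T) (P' ++ δ :: T') := by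
  rcases heads with h | ⟨hδ, h | h⟩
  · exact Or.inr (Or.inl (GLP.iff_intro
      (imp_worm_append_cons hP' (GLP.imp_trans (worm_append_imp _ _) (GLP.iff_mp h)) hT')
      (imp_worm_append_cons hP (GLP.imp_trans (worm_append_imp _ _) (GLP.iff_mpr h)) hT)))
  · exact Or.inl (Lt.append_cons hδ hP (h.of_imp (worm_append_imp _ _)) hT)
  · exact Or.inr (Or.inr (Lt.append_cons hδ hP' (h.of_imp (worm_append_imp _ _)) hT'))

variable [SuccOrder L]

theorem trichotomy_of_mem_right {δ : L} {U V : List L}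
    (ih : ∀ (β : L) (U' V' : List L), U'.length + V'.length < U.length + V.length →
      (∀ m ∈ U', β ≤ m) → (∀ m ∈ V', β ≤ m) → Trichotomy β U' V')
    (hU : ∀ m ∈ U, δ ≤ m) (hV : ∀ m ∈ V, δ ≤ m) (hδV : δ ∈ V) : Trichotomy δ U V := by
  obtain ⟨P, T, rfl, hP⟩ := List.exists_eq_append_cons_forall_lt hδV hV
  have hT : ∀ m ∈ T, δ ≤ m := fun m hm => hV m (by simp [hm])
  have heads : ∀ {Q}, (∀ m ∈ Q, δ < m) → Q.length ≤ U.length →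
      GLP ((worm Q).iff (worm P)) ∨
        δ < Order.succ δ ∧ (Lt (Order.succ δ) Q P ∨ Lt (Order.succ δ) P Q) := fun hQ hlen =>
    (ih _ _ P (by simp; omega) (fun m hm => Order.succ_le_of_lt (hQ m hm))
      (fun m hm => Order.succ_le_of_lt (hP m hm))).iff_or_lt_succ hQ hP
  rcases (ih δ U T (by simp; omega) hU hT).lt_or_lt
    (lt_append_cons (fun m hm => (hP m hm).le) T) with h | hTU
  · exact Or.inl h
  by_cases hδU : δ ∈ U
  · obtain ⟨P', T', rfl, hP'⟩ := List.exists_eq_append_cons_forall_lt hδU hU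
    rcases (ih δ T' _ (by simp; omega) (fun m hm => hU m (by simp [hm])) hV).symm.lt_or_lt
      (lt_append_cons (fun m hm => (hP' m hm).le) T') with h | hT'
    · exact Or.inr (Or.inr h)
    · exact trichotomy_append_cons_append_cons hP' hP hT' hTU (heads hP' (by simp))
  · exact trichotomy_append_cons hP hTU
      (heads (fun m hm => (hU m hm).lt_of_ne fun e => hδU (e ▸ hm)) le_rfl)

theorem trichotomy (β : L) (U V : List L) (hU : ∀ m ∈ U, β ≤ m) (hV : ∀ m ∈ V, β ≤ m) :
    Trichotomy β U V := by
  induction hn : U.length + V.length using Nat.strong_induction_on generalizing β U V with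
  | _ n ih =>
  subst hn
  by_cases hUV : U ++ V = []
  · obtain ⟨rfl, rfl⟩ := List.append_eq_nil_iff.mp hUV
    exact Or.inr (Or.inl (GLP.iff_refl _))
  obtain ⟨δ, hδ, hδmin⟩ := List.exists_mem_forall_le_of_ne_nil hUV
  have hUδ : ∀ m ∈ U, δ ≤ m := fun m hm => hδmin m (by simp [hm])
  have hVδ : ∀ m ∈ V, δ ≤ m := fun m hm => hδmin m (by simp [hm])
  have ih' : ∀ (β : L) (U' V' : List L), U'.length + V'.length < U.length + V.length →
      (∀ m ∈ U', β ≤ m) → (∀ m ∈ V', β ≤ m) → Trichotomy β U' V' :=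
    fun β U' V' hlt hU' hV' => ih _ hlt β U' V' hU' hV' rfl
  rcases List.mem_append.mp hδ with hδU | hδV
  · refine (Trichotomy.symm ?_).of_le (hU δ hδU)
    exact trichotomy_of_mem_right (fun β U' V' hlt => ih' β U' V' (by omega)) hVδ hUδ hδU
  · exact (trichotomy_of_mem_right ih' hUδ hVδ hδV).of_le (hV δ hδV)

end Trichotomy

section NormalForm

variable {L : Type}

theorem mem_joinSep {γ m : L} : ∀ {qs : List (List L)}, m ∈ joinSep γ qs →
    m = γ ∨ ∃ q ∈ qs, m ∈ q
  | [], h => by simp [joinSep] at h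
  | [q], h => Or.inr ⟨q, by simp, h⟩
  | q :: r :: qs, h => by
    simp only [joinSep, List.mem_append, List.mem_cons] at h
    rcases h with h | h | h
    · exact Or.inr ⟨q, by simp, h⟩
    · exact Or.inl h
    · rcases mem_joinSep h with h | ⟨p, hp, hm⟩
      · exact Or.inl h
      · exact Or.inr ⟨p, by simp [hp], hm⟩

theorem mem_joinSep_self (γ : L) {qs : List (List L)} (h : 2 ≤ qs.length) :
    γ ∈ joinSep γ qs := by
  match qs, h with
  | _ :: _ :: _, _ => simp [joinSep]

theorem subset_joinSep_cons (γ : L) (q : List L) (qs : List (List L)) :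
    q ⊆ joinSep γ (q :: qs) := by
  cases qs <;> simp [joinSep]

variable [LinearOrder L] [SuccOrder L]

def WNFBlocks (γ : L) (qs : List (List L)) : Prop :=
  (∀ q ∈ qs, ∀ m ∈ q, γ < m) ∧ (∀ q ∈ qs, WNF q) ∧ qs.IsChain (Le (Order.succ γ))

namespace WNFBlocks

variable {γ : L} {p q : List L} {qs : List (List L)}

theorem wnf_joinSep : ∀ {qs : List (List L)}, WNFBlocks γ qs → WNF (joinSep γ qs)
  | [], _ => WNF.nil
  | [q], h => h.2.1 q (by simp)
  | _ :: _ :: _, h => WNF.node γ _ (by simp) h.1 h.2.1 h.2.2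

theorem tail (h : WNFBlocks γ (q :: qs)) : WNFBlocks γ qs :=
  ⟨fun r hr => h.1 r (by simp [hr]), fun r hr => h.2.1 r (by simp [hr]), h.2.2.tail⟩

theorem cons (hp : ∀ m ∈ p, γ < m) (wp : WNF p) (hpq : Le (Order.succ γ) p q)
    (h : WNFBlocks γ (q :: qs)) : WNFBlocks γ (p :: q :: qs) :=
  ⟨List.forall_mem_cons.mpr ⟨hp, h.1⟩, List.forall_mem_cons.mpr ⟨wp, h.2.1⟩,
    List.isChain_cons_cons.mpr ⟨hpq, h.2.2⟩⟩

end WNFBlocks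

theorem WNF.exists_WNFBlocks {γ : L} {B : List L} (hB : WNF B) (hγ : ∀ m ∈ B, γ ≤ m) :
    ∃ qs, WNFBlocks γ qs ∧ qs ≠ [] ∧ joinSep γ qs = B := by
  by_cases hγB : γ ∈ B
  · cases hB with
    | nil => simp at hγB
    | node δ parts hlen hmods hwnf hord =>
      have hδγ : δ = γ := by
        refine le_antisymm ?_ (hγ δ (mem_joinSep_self δ hlen))
        rcases mem_joinSep hγB with h | ⟨p, hp, hm⟩
        exacts [h.ge, (hmods p hp γ hm).le]
      subst hδγ
      exact ⟨parts, ⟨hmods, hwnf, hord⟩, List.ne_nil_of_length_pos (by omega), rfl⟩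
  · refine ⟨[B], ⟨?_, by simpa using hB, List.isChain_singleton _⟩, by simp, rfl⟩
    simpa using fun m hm => (hγ m hm).lt_of_ne fun e => hγB (e ▸ hm)

theorem exists_WNF_append_cons_joinSep {γ : L} {H : List L} (wH : WNF H)
    (hH : ∀ m ∈ H, γ < m) : ∀ {qs : List (List L)}, WNFBlocks γ qs → qs ≠ [] →
      ∃ B, WNF B ∧ GLP ((worm (H ++ γ :: joinSep γ qs)).iff (worm B)) ∧
        B ⊆ H ++ γ :: joinSep γ qs
  | [], _, hne => absurd rfl hne
  | q :: qs, hqs, _ => by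
    have hq : ∀ m ∈ q, γ < m := hqs.1 q (by simp)
    have hcmp := (trichotomy (Order.succ γ) H q (fun m hm => Order.succ_le_of_lt (hH m hm))
      (fun m hm => Order.succ_le_of_lt (hq m hm))).iff_or_lt_succ hH hq
    rcases hcmp with hiff | ⟨hγ, hlt | hlt⟩
    · refine ⟨joinSep γ (q :: q :: qs),
        (hqs.cons hq (hqs.2.1 q (by simp)) (Or.inr rfl)).wnf_joinSep,
        worm_append_cons_congr hH hq hiff (GLP.iff_refl _), fun m hm => ?_⟩
      simp only [joinSep, List.mem_append, List.mem_cons] at hm ⊢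
      rcases hm with h | h | h
      exacts [Or.inr (Or.inr (subset_joinSep_cons γ q qs h)), Or.inr (Or.inl h), Or.inr (Or.inr h)]
    · exact ⟨joinSep γ (H :: q :: qs), (hqs.cons hH wH (Or.inl hlt)).wnf_joinSep,
        GLP.iff_refl _, List.Subset.refl _⟩
    · cases qs with
      | nil =>
        exact ⟨H, wH, worm_append_cons_iff_of_lt hγ.le hH hlt, List.subset_append_left _ _⟩
      | cons r rs =>
        obtain ⟨B, wB, hB, hBs⟩ := exists_WNF_append_cons_joinSep wH hH hqs.tail (by simp)
        refine ⟨B, wB, GLP.iff_trans (worm_append_cons_append_cons_iff_of_lt hγ hH hq hlt) hB,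
          fun m hm => ?_⟩
        have := hBs hm
        simp only [joinSep, List.mem_append, List.mem_cons] at this ⊢
        tauto

end NormalForm

/-- Every worm is `GLP`-equivalent to a worm in worm normal form whose
modalities are among those of the original worm. -/
theorem exists_WNF {L : Type} [LinearOrder L] [SuccOrder L] (A : List L) :
    ∃ B : List L, WNF B ∧ GLP ((worm A).iff (worm B)) ∧ ∀ β ∈ B, β ∈ A := by
  induction hn : A.length using Nat.strong_induction_on generalizing A with
  | _ n ih =>
  by_cases hA : A = []
  · exact ⟨[], WNF.nil, hA ▸ GLP.iff_refl _, fun _ h => by simp at h⟩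
  obtain ⟨γ, hγA, hγ⟩ := List.exists_mem_forall_le_of_ne_nil hA
  obtain ⟨H, T, rfl, hH⟩ := List.exists_eq_append_cons_forall_lt hγA hγ
  obtain ⟨BH, wBH, eBH, sBH⟩ := ih H.length (by simp [← hn]) H rfl
  obtain ⟨BT, wBT, eBT, sBT⟩ := ih T.length (by simp [← hn]; omega) T rfl
  obtain ⟨qs, hqs, hne, rfl⟩ := wBT.exists_WNFBlocks fun m hm => hγ m (by simp [sBT m hm])
  have hBH : ∀ m ∈ BH, γ < m := fun m hm => hH m (sBH m hm)
  obtain ⟨B, wB, eB, sB⟩ := exists_WNF_append_cons_joinSep wBH hBH hqs hne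
  refine ⟨B, wB, GLP.iff_trans (worm_append_cons_congr hH hBH eBH eBT) eB, fun m hm => ?_⟩
  have := sB hm
  simp only [List.mem_append, List.mem_cons] at this ⊢
  rcases this with h | h | h
  exacts [Or.inl (sBH m h), Or.inr (Or.inl h), Or.inr (Or.inr (sBT m h))]
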